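/- For every triple (M, L, N) in the q-Cohn tree 𝒯_q there exist Laurent polynomials x, y, z ∈ ℤ[q,q⁻¹] with Tr(M) = [3]_q·x, Tr(L) = [3]_q·y, Tr(N) = [3]_q·z, and this triple (x, y, z) satisfies the q-deformed Markov equation x² + y² + z² + (q−1)²·q⁻³ = [3]_q·x·y·z. -/

import Mathlib

open Matrix LaurentPolynomial

/-- `q` as an element of the Laurent polynomial ring `ℤ[q,q⁻¹]`. -/
noncomputable abbrev q : LaurentPolynomial ℤ := T 1

/-- `q⁻¹` as an element of the Laurent polynomial ring `ℤ[q,q⁻¹]`. -/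
noncomputable abbrev qinv : LaurentPolynomial ℤ := T (-1)

lemma q_mul_qinv : q * qinv = 1 := by rw [← T_add]; norm_num

/-- The matrix `A_q = [[q+1, q⁻¹], [1, q⁻¹]]` in `SL(2, ℤ[q,q⁻¹])`. -/
noncomputable def Aq : Matrix.SpecialLinearGroup (Fin 2) (LaurentPolynomial ℤ) :=
  ⟨!![q + 1, qinv; 1, qinv], by
    rw [Matrix.det_fin_two_of]
    linear_combination q_mul_qinv⟩

/-- The matrix `B_q = [[(q³+q²+2q+1)·q⁻¹, (q+1)·q⁻²], [(q+1)·q⁻¹, q⁻²]]`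
in `SL(2, ℤ[q,q⁻¹])`. -/
noncomputable def Bq : Matrix.SpecialLinearGroup (Fin 2) (LaurentPolynomial ℤ) :=
  ⟨!![(q ^ 3 + q ^ 2 + 2 * q + 1) * qinv, (q + 1) * qinv ^ 2;
      (q + 1) * qinv, qinv ^ 2], by
    rw [Matrix.det_fin_two_of]
    linear_combination (q ^ 2 * qinv ^ 2 + q * qinv + 1) * q_mul_qinv⟩

/-- The `q`-Cohn tree `𝒯_q`: the smallest set of triples of matrices in
`SL(2, ℤ[q,q⁻¹])` containing `(A_q, A_q·B_q, B_q)` and closed under the two moves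
`(M, L, N) ↦ (M, M·L, L)` and `(M, L, N) ↦ (L, L·N, N)`. -/
inductive qCohnTree :
    Matrix.SpecialLinearGroup (Fin 2) (LaurentPolynomial ℤ) →
    Matrix.SpecialLinearGroup (Fin 2) (LaurentPolynomial ℤ) →
    Matrix.SpecialLinearGroup (Fin 2) (LaurentPolynomial ℤ) → Prop
  | seed : qCohnTree Aq (Aq * Bq) Bq
  | left {M L N} : qCohnTree M L N → qCohnTree M (M * L) L
  | right {M L N} : qCohnTree M L N → qCohnTree L (L * N) N

/-! Every triple of the tree has the form `(M, M·N, N)`, and the two moves replace the pair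
`(M, N)` by `(M, M·N)` or `(M·N, N)`. For `M, N ∈ SL₂` the Cayley–Hamilton relation gives
`tr(M·M·N) = tr M · tr(M·N) − tr N`, so on the normalized traces `(x, y, z) = tr(M, M·N, N) / [3]_q`
a move acts as the Vieta involution `(x, y, z) ↦ (x, [3]_q·x·y − z, y)` (or its mirror image),
which preserves the `q`-Markov equation. It remains to check the seed `(A_q, B_q)` by hand. -/

open scoped MatrixGroups

section MarkovTraces

variable {R : Type*} [CommRing R]

lemma trace_mul_self_mul_fin_two (A B : Matrix (Fin 2) (Fin 2) R) :
    trace (A * A * B) = trace A * trace (A * B) - A.det * trace B := by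
  simp only [trace_fin_two, mul_apply, det_fin_two, Fin.sum_univ_two]
  ring

lemma trace_mul_mul_self_fin_two (A B : Matrix (Fin 2) (Fin 2) R) :
    trace (A * B * B) = trace (A * B) * trace B - B.det * trace A := by
  simp only [trace_fin_two, mul_apply, det_fin_two, Fin.sum_univ_two]
  ring

def IsMarkovTriple (k c x y z : R) : Prop :=
  x ^ 2 + y ^ 2 + z ^ 2 + c = k * x * y * z

lemma IsMarkovTriple.vieta_left {k c x y z : R} (h : IsMarkovTriple k c x y z) :
    IsMarkovTriple k c x (k * x * y - z) y := by
  unfold IsMarkovTriple at *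
  linear_combination h

lemma IsMarkovTriple.vieta_right {k c x y z : R} (h : IsMarkovTriple k c x y z) :
    IsMarkovTriple k c y (k * y * z - x) z := by
  unfold IsMarkovTriple at *
  linear_combination h

def HasMarkovTraces (k c : R) (M N : SL(2, R)) : Prop :=
  ∃ x y z : R,
    trace (M : Matrix (Fin 2) (Fin 2) R) = k * x ∧
    trace ((M * N : SL(2, R)) : Matrix (Fin 2) (Fin 2) R) = k * y ∧
    trace (N : Matrix (Fin 2) (Fin 2) R) = k * z ∧
    IsMarkovTriple k c x y z

variable {k c : R} {M N : SL(2, R)}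

lemma HasMarkovTraces.mul_left (h : HasMarkovTraces k c M N) : HasMarkovTraces k c M (M * N) := by
  obtain ⟨x, y, z, hx, hy, hz, hxyz⟩ := h
  refine ⟨x, k * x * y - z, y, hx, ?_, hy, hxyz.vieta_left⟩
  simp only [Matrix.SpecialLinearGroup.coe_mul] at hy ⊢
  rw [← mul_assoc, trace_mul_self_mul_fin_two, Matrix.SpecialLinearGroup.det_coe, hx, hy, hz]
  ring

lemma HasMarkovTraces.mul_right (h : HasMarkovTraces k c M N) : HasMarkovTraces k c (M * N) N := by
  obtain ⟨x, y, z, hx, hy, hz, hxyz⟩ := h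
  refine ⟨y, k * y * z - x, z, hy, ?_, hz, hxyz.vieta_right⟩
  simp only [Matrix.SpecialLinearGroup.coe_mul] at hy ⊢
  rw [trace_mul_mul_self_fin_two, Matrix.SpecialLinearGroup.det_coe, hx, hy, hz]
  ring

end MarkovTraces

lemma hasMarkovTraces_Aq_Bq :
    HasMarkovTraces (1 + q + q ^ 2) ((q - 1) ^ 2 * qinv ^ 3) Aq Bq := by
  refine ⟨qinv, (q ^ 4 + q ^ 3 + q ^ 2 + q + 1) * qinv ^ 3, (q ^ 2 + 1) * qinv ^ 2,
    ?_, ?_, ?_, ?_⟩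
  -- `grind` decides identities in `ℤ[q,q⁻¹]` given the single relation `q * qinv = 1`.
  · simp only [Aq, trace_fin_two_of]
    grind [q_mul_qinv]
  · rw [Matrix.SpecialLinearGroup.coe_mul]
    simp only [Aq, Bq, mul_fin_two, trace_fin_two_of]
    grind [q_mul_qinv]
  · simp only [Bq, trace_fin_two_of]
    grind [q_mul_qinv]
  · unfold IsMarkovTriple
    grind [q_mul_qinv]

namespace qCohnTree

variable {M L N : SL(2, ℤ[T;T⁻¹])}

lemma eq_mul (h : qCohnTree M L N) : L = M * N := by
  cases h <;> rfl

lemma hasMarkovTraces (h : qCohnTree M L N) :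
    HasMarkovTraces (1 + q + q ^ 2) ((q - 1) ^ 2 * qinv ^ 3) M N := by
  induction h with
  | seed => exact hasMarkovTraces_Aq_Bq
  | left h ih => exact h.eq_mul ▸ ih.mul_left
  | right h ih => exact h.eq_mul ▸ ih.mul_right

end qCohnTree

/-- For every triple `(M, L, N)` in the `q`-Cohn tree there exist
`x, y, z ∈ ℤ[q,q⁻¹]` with `Tr(M) = [3]_q·x`, `Tr(L) = [3]_q·y`, `Tr(N) = [3]_q·z`,
and `(x, y, z)` satisfies the `q`-deformed Markov equation
`x² + y² + z² + (q−1)²·q⁻³ = [3]_q·x·y·z`. -/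
theorem qMarkov_of_qCohnTree
    (M L N : Matrix.SpecialLinearGroup (Fin 2) (LaurentPolynomial ℤ))
    (h : qCohnTree M L N) :
    ∃ x y z : LaurentPolynomial ℤ,
      trace (M : Matrix (Fin 2) (Fin 2) (LaurentPolynomial ℤ)) = (1 + q + q ^ 2) * x ∧
      trace (L : Matrix (Fin 2) (Fin 2) (LaurentPolynomial ℤ)) = (1 + q + q ^ 2) * y ∧
      trace (N : Matrix (Fin 2) (Fin 2) (LaurentPolynomial ℤ)) = (1 + q + q ^ 2) * z ∧
      x ^ 2 + y ^ 2 + z ^ 2 + (q - 1) ^ 2 * qinv ^ 3 = (1 + q + q ^ 2) * x * y * z := by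
  obtain rfl := h.eq_mul
  exact h.hasMarkovTraces
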